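/- Let G be a graph, v a fresh vertex inserted with neighborhood N(v), and G' the resulting graph. Fix a new edge e* = (v,w). If τ_{G'}(e*) ≥ k+1, then there exists a subgraph H of the induced subgraph G[N(v)] containing w such that every edge e of H has τ_G(e) ≥ k and every vertex of H has degree at least k−1 in H. (Upper-bound direction of Lemma 1: τ_new(e) ≤ max{k : w ∈ G_v^{k−1,k−2}}.) -/

import Mathlib

open SimpleGraph

/-- Support of an edge (u,v) in a subgraph K: number of common neighbors of u and v in K. -/
noncomputable def esupp {V : Type*} {G : SimpleGraph V} (K : G.Subgraph) (u v : V) : ℕ :=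
  {w | K.Adj u w ∧ K.Adj v w}.ncard

/-- K is a k-truss: every edge of K is contained in at least k-2 triangles within K. -/
def IsKTruss {V : Type*} {G : SimpleGraph V} (K : G.Subgraph) (k : ℕ) : Prop :=
  ∀ u v, K.Adj u v → k - 2 ≤ esupp K u v

/-- Trussness of edge (u,v) in G: the largest k such that some k-truss of G contains (u,v). -/
noncomputable def tr {V : Type*} (G : SimpleGraph V) (u v : V) : ℕ :=
  sSup {k | ∃ K : G.Subgraph, K.Adj u v ∧ IsKTruss K k}

/-- Support of an edge (u,v) in a graph G. -/
noncomputable def gsupp {V : Type*} (G : SimpleGraph V) (u v : V) : ℕ :=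
  {w | G.Adj u w ∧ G.Adj v w}.ncard

/-!
Take a `(k+1)`-truss `K` of `G'` through `v w`. Deleting `v` costs every remaining edge at most
one triangle, so `K - v` is a `k`-truss of `G`, and its edges have trussness at least `k` in `G`.
The part of `K` induced on the `K`-neighbours of `v` lies in `G[N]`, and the degree of a vertex
`u` there is the number of triangles of `K` on the edge `v u`, hence at least `k - 1`.
-/

-- In `ℕ`, `sSup` of an empty or unbounded set is `0`.
theorem Nat.sSup_mem_of_pos {s : Set ℕ} (h : 0 < sSup s) : sSup s ∈ s := by
  have hbdd : BddAbove s := by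
    by_contra hs
    rw [Nat.sSup_of_not_bddAbove hs] at h
    exact h.false
  refine Nat.sSup_mem (Set.nonempty_iff_ne_empty.2 ?_) hbdd
  rintro rfl
  simp at h

namespace SimpleGraph.Subgraph

variable {V : Type*} {G G' : SimpleGraph V}

def transfer (K : G'.Subgraph) (h : ∀ ⦃a b⦄, K.Adj a b → G.Adj a b) : G.Subgraph :=
  { K with adj_sub := fun hab => h hab }

@[simp]
theorem neighborSet_transfer (K : G'.Subgraph) (h : ∀ ⦃a b⦄, K.Adj a b → G.Adj a b) (u : V) :
    (K.transfer h).neighborSet u = K.neighborSet u :=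
  rfl

end SimpleGraph.Subgraph

section Truss

variable {V : Type*} {G G' : SimpleGraph V} {K : G.Subgraph} {j k : ℕ} {u v : V}

theorem IsKTruss.mono (hK : IsKTruss K k) (hjk : j ≤ k) : IsKTruss K j :=
  fun a b hab => (Nat.sub_le_sub_right hjk 2).trans (hK a b hab)

theorem isKTruss_transfer {K : G'.Subgraph} {h : ∀ ⦃a b⦄, K.Adj a b → G.Adj a b} :
    IsKTruss (K.transfer h) k ↔ IsKTruss K k :=
  Iff.rfl

theorem IsKTruss.deleteVerts_singleton (hK : IsKTruss K (k + 1)) (v : V) :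
    IsKTruss (K.deleteVerts {v}) k := by
  intro a b hab
  obtain ⟨-, ha, -, hb, hab⟩ := Subgraph.deleteVerts_adj.1 hab
  have hcommon : {c | (K.deleteVerts {v}).Adj a c ∧ (K.deleteVerts {v}).Adj b c} =
      {c | K.Adj a c ∧ K.Adj b c} \ {v} := by
    ext c
    simp only [Subgraph.deleteVerts_adj, Set.mem_ofPred_eq, Set.mem_sdiff]
    exact ⟨fun ⟨⟨_, _, _, hc, hac⟩, _, _, _, _, hbc⟩ => ⟨⟨hac, hbc⟩, hc⟩,
      fun ⟨⟨hac, hbc⟩, hc⟩ => ⟨⟨hab.fst_mem, ha, hac.snd_mem, hc, hac⟩,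
        ⟨hab.snd_mem, hb, hbc.snd_mem, hc, hbc⟩⟩⟩
  calc k - 2 = (k + 1 - 2) - 1 := by omega
    _ ≤ esupp K a b - 1 := Nat.sub_le_sub_right (hK a b hab) 1
    _ ≤ esupp (K.deleteVerts {v}) a b := by
      rw [esupp, esupp, hcommon]
      exact Set.pred_ncard_le_ncard_sdiff_singleton _ v

theorem induce_neighborSet_le_deleteVerts (K : G.Subgraph) (v : V) :
    K.induce (K.neighborSet v) ≤ K.deleteVerts {v} :=
  ⟨fun _ hvx => ⟨hvx.snd_mem, hvx.ne.symm⟩,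
    fun _ _ ⟨hva, hvb, hab⟩ => ⟨⟨hab.fst_mem, hva.ne.symm⟩, ⟨hab.snd_mem, hvb.ne.symm⟩, hab⟩⟩

theorem ncard_neighborSet_induce_neighborSet (huv : K.Adj v u) :
    ((K.induce (K.neighborSet v)).neighborSet u).ncard = esupp K v u := by
  congr 1
  ext c
  exact ⟨fun ⟨_, hvc, huc⟩ => ⟨hvc, huc⟩, fun ⟨hvc, huc⟩ => ⟨huv, hvc, huc⟩⟩

theorem exists_isKTruss_of_le_tr (hk : 0 < k) (h : k ≤ tr G u v) :
    ∃ K : G.Subgraph, K.Adj u v ∧ IsKTruss K k := by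
  obtain ⟨K, huv, hK⟩ := Nat.sSup_mem_of_pos (hk.trans_le h)
  exact ⟨K, huv, hK.mono h⟩

theorem IsKTruss.le_tr [Finite V] (hK : IsKTruss K k) (huv : K.Adj u v) : k ≤ tr G u v := by
  refine le_csSup ⟨Nat.card V + 2, ?_⟩ ⟨K, huv, hK⟩
  rintro j ⟨L, huv, hL⟩
  exact Nat.le_add_of_sub_le ((hL u v huv).trans (Set.ncard_le_card _))

end Truss

theorem stmt9_general {V : Type*} [Fintype V] (G G' : SimpleGraph V) (v : V) (N : Set V)
    (hIso : ∀ w, ¬ G.Adj v w)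
    (hG' : ∀ x y, G'.Adj x y ↔ G.Adj x y ∨ (x = v ∧ y ∈ N) ∨ (y = v ∧ x ∈ N))
    (w : V) (k : ℕ) (h : k + 1 ≤ tr G' v w) :
    ∃ H : G.Subgraph, H.verts ⊆ N ∧ w ∈ H.verts ∧
      (∀ x y, H.Adj x y → k ≤ tr G x y) ∧
      ∀ u ∈ H.verts, k - 1 ≤ (H.neighborSet u).ncard := by
  obtain ⟨K, hvw, hK⟩ := exists_isKTruss_of_le_tr k.succ_pos h
  have hKv : ∀ ⦃a b⦄, (K.deleteVerts {v}).Adj a b → G.Adj a b := by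
    intro a b hab
    obtain ⟨-, ha, -, hb, hab⟩ := Subgraph.deleteVerts_adj.1 hab
    rcases (hG' a b).1 (K.adj_sub hab) with hab | ⟨rfl, -⟩ | ⟨rfl, -⟩
    exacts [hab, (ha rfl).elim, (hb rfl).elim]
  have hinduce_le := induce_neighborSet_le_deleteVerts K v
  have hL : IsKTruss ((K.deleteVerts {v}).transfer hKv) k :=
    isKTruss_transfer.2 (hK.deleteVerts_singleton v)
  refine ⟨(K.induce (K.neighborSet v)).transfer fun a b hab => hKv (hinduce_le.2 hab),
    ?_, hvw, fun x y hxy => ?_, fun u hvu => ?_⟩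
  · intro x hvx
    rcases (hG' v x).1 (K.adj_sub hvx) with hGvx | ⟨-, hx⟩ | ⟨rfl, -⟩
    exacts [(hIso x hGvx).elim, hx, (hvx.ne rfl).elim]
  · exact hL.le_tr (hinduce_le.2 hxy)
  · rw [Subgraph.neighborSet_transfer, ncard_neighborSet_induce_neighborSet hvu]
    exact hK v u hvu

/-- upper bound of Lemma 1: if a new edge (v,w) has trussness ≥ k+1 in
the graph obtained by inserting the fresh vertex v with edges to N, then there is a
subgraph H of G[N(v)] containing w whose edges all have trussness ≥ k in G and whose
vertices all have degree ≥ k-1 in H. -/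
theorem stmt9 {V : Type*} [Fintype V] (G G' : SimpleGraph V) (v : V) (N : Set V)
    (hvN : v ∉ N) (hIso : ∀ w, ¬ G.Adj v w)
    (hG' : ∀ x y, G'.Adj x y ↔ G.Adj x y ∨ (x = v ∧ y ∈ N) ∨ (y = v ∧ x ∈ N))
    (w : V) (hw : w ∈ N) (k : ℕ) (h : k + 1 ≤ tr G' v w) :
    ∃ H : G.Subgraph, H.verts ⊆ N ∧ w ∈ H.verts ∧
      (∀ x y, H.Adj x y → k ≤ tr G x y) ∧
      ∀ u ∈ H.verts, k - 1 ≤ (H.neighborSet u).ncard :=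
  stmt9_general G G' v N hIso hG' w k h
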